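/- For the path ρ_t = diag(1−t, t) on [0,1), any family of Lindbladians of the form L_t = γ₀₁(t)·L_{e₀₁} + γ₁₀(t)·L_{e₁₀} with γ₀₁(t), γ₁₀(t) ≥ 0 satisfying L_t(ρ_t) = diag(−1, 1) must have γ₁₀(t) ≥ 1/(1−t); in particular γ₁₀(t) is unbounded as t → 1. -/
import Mathlib


open Matrix

/-- The dissipator `L_a(ρ) = aρa† − ½{a†a, ρ}` with jump operator `a`. -/
noncomputable def jump {d : Type} [Fintype d] (a ρ : Matrix d d ℂ) : Matrix d d ℂ :=
  a * ρ * aᴴ - (2 : ℂ)⁻¹ • (aᴴ * a * ρ + ρ * (aᴴ * a))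

/-- The path `ρ_t = diag(1−t, t)`. -/
noncomputable def rho (t : ℝ) : Matrix (Fin 2) (Fin 2) ℂ :=
  !![((1 - t : ℝ) : ℂ), 0; 0, ((t : ℝ) : ℂ)]

/-- For `ρ_t = diag(1−t,t)` on `[0,1)`, any Lindbladian of the form
`γ₀₁(t)·L_{e₀₁} + γ₁₀(t)·L_{e₁₀}` with nonnegative rates satisfying
`L_t(ρ_t) = diag(−1,1)` must have `γ₁₀(t) ≥ 1/(1−t)`. -/
theorem stmt_7 (t : ℝ) (ht : t ∈ Set.Ico (0 : ℝ) 1)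
    (γ01 γ10 : ℝ) (h01 : 0 ≤ γ01) (h10 : 0 ≤ γ10)
    (heq : (γ01 : ℂ) • jump !![0, 1; 0, 0] (rho t) +
           (γ10 : ℂ) • jump !![0, 0; 1, 0] (rho t) = !![-1, 0; 0, 1]) :
    γ10 ≥ 1 / (1 - t) := by
  obtain ⟨ht0, ht1⟩ := ht
  have h11 := congrFun (congrFun heq 1) 1
  simp only [jump, rho, Matrix.add_apply, Matrix.smul_apply, Matrix.sub_apply,
    Matrix.mul_apply, Fin.sum_univ_two, Matrix.conjTranspose_apply] at h11
  norm_num [Matrix.cons_val_zero, Matrix.cons_val_one, Matrix.head_cons] at h11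
  have hr : -(γ01 * (1/2*(t+t))) + γ10*(1-t) = 1 := by
    have h := congrArg Complex.re h11; simpa using h
  rw [ge_iff_le, div_le_iff₀ (by linarith)]
  nlinarith [mul_nonneg h01 ht0]
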